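/- arXiv:1606.04530 — 3 statements merged into one kernel-verified Lean document; each statement's English description precedes it below -/
import Mathlib

section
/- In the affine Temperley–Lieb algebra aTL_{N₁+N₂}(m) with m = q + q^{-1}, the images u⁽¹⁾ = u g_{N-1}^{-1} ⋯ g_{N₁}^{-1} and u⁽²⁾ = g_{N₁} ⋯ g_1 u (with N = N₁+N₂ and g_i = i(q^{1/2} − q^{-1/2}e_i)) commute: u⁽¹⁾ u⁽²⁾ = u⁽²⁾ u⁽¹⁾. -/
/-!
Conjugation by `u` shifts indices: `u g_j = g_{j+1} u`, and likewise for `g_j⁻¹`. Pushing `u` to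
the left through the two chains turns `u⁽¹⁾ u⁽²⁾` into
`u² (g⁻¹_{N-2} ⋯ g⁻¹_{N₁-1}) (g_{N₁-1} ⋯ g_0)` and `u⁽²⁾ u⁽¹⁾` into
`u² (g_{N₁-2} ⋯ g_{-1}) (g⁻¹_{N-1} ⋯ g⁻¹_{N₁})`. At each junction a factor `g⁻¹_j g_j` or
`g_j g⁻¹_j` cancels (using `g_{-1} = g_{N-1}`), leaving `u² Q R` and `u² R Q` with
`Q = g⁻¹_{N-2} ⋯ g⁻¹_{N₁}` and `R = g_{N₁-2} ⋯ g_0`. All indices of `Q` are at cyclic distance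
at least 2 from those of `R`, so `Q` and `R` commute. The three facts used about the `g_j` —
invertibility, the shift, and distant commutation — follow from `e_j² = m e_j`,
`u e_j u⁻¹ = e_{j+1}` and distant commutation of the `e_j`.
-/

/-- The defining relations of the affine Temperley–Lieb algebra `aTL_N(m)`:
`u` is invertible, `e_j² = m e_j`, `e_j e_{j±1} e_j = e_j`, distant `e`'s commute,
`u e_j u⁻¹ = e_{j+1}`, and `u² e_{N−1} = e_1 ⋯ e_{N−1}` (indices in `ℤ/Nℤ`,
so `e_{N−1} = e (−1)`). -/
structure AffineTLRel (A : Type*) [Ring A] [Algebra ℂ A] (N : ℕ)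
    (m : ℂ) (u uinv : A) (e : ZMod N → A) : Prop where
  mul_uinv : u * uinv = 1
  uinv_mul : uinv * u = 1
  esq : ∀ j, e j * e j = m • e j
  eje : ∀ j, e j * e (j + 1) * e j = e j
  eje' : ∀ j, e (j + 1) * e j * e (j + 1) = e (j + 1)
  ecomm : ∀ j l, j ≠ l → j ≠ l + 1 → l ≠ j + 1 → e j * e l = e l * e j
  uconj : ∀ j, u * e j * uinv = e (j + 1)
  utwist : u * u * e (-1) =
    ((List.range (N - 1)).map (fun t => e ((t + 1 : ℕ) : ZMod N))).prod

section DescProd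

variable {M : Type*} [Monoid M] {R : Type*} [AddCommGroupWithOne R]

def descProd (f : R → M) (a : R) (n : ℕ) : M :=
  ((List.range n).map fun t : ℕ => f (a - t)).prod

theorem descProd_succ (f : R → M) (a : R) (n : ℕ) :
    descProd f a (n + 1) = f a * descProd f (a - 1) n := by
  simp only [descProd, List.prod_range_succ', Nat.cast_zero, sub_zero, Nat.cast_succ,
    sub_add_eq_sub_sub_swap]

theorem descProd_succ' (f : R → M) (a : R) (n : ℕ) :
    descProd f a (n + 1) = descProd f a n * f (a - n) :=
  List.prod_range_succ _ n

theorem descProd_semiconjBy {u : M} {f : R → M} (hf : ∀ j, SemiconjBy u (f j) (f (j + 1)))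
    (a : R) (n : ℕ) : SemiconjBy u (descProd f a n) (descProd f (a + 1) n) := by
  induction n with
  | zero => exact SemiconjBy.one_right u
  | succ n ih =>
    rw [descProd_succ', descProd_succ', ← sub_add_eq_add_sub]
    exact ih.mul_right (hf _)

theorem commute_descProd {f f' : R → M} {a a' : R} {n n' : ℕ}
    (h : ∀ s < n, ∀ t < n', Commute (f (a - s)) (f' (a' - t))) :
    Commute (descProd f a n) (descProd f' a' n') := by
  refine Commute.list_prod_left _ _ fun x hx => Commute.list_prod_right _ _ fun y hy => ?_
  obtain ⟨s, hs, rfl⟩ := List.mem_map.mp hx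
  obtain ⟨t, ht, rfl⟩ := List.mem_map.mp hy
  exact h s (List.mem_range.mp hs) t (List.mem_range.mp ht)

theorem descProd_natCast (f : R → M) {a n : ℕ} (hn : n ≤ a + 1) :
    descProd f a n = ((List.range n).map fun t => f ((a - t : ℕ) : R)).prod := by
  refine congrArg List.prod (List.map_congr_left fun t ht => ?_)
  rw [Nat.cast_sub (by have := List.mem_range.mp ht; omega)]

end DescProd

theorem commute_mul_descProd_descProd_mul {M : Type*} [Monoid M] {N₁ N₂ : ℕ}
    (h1 : 1 ≤ N₁) (h2 : 1 ≤ N₂) {u : M} {g g' : ZMod (N₁ + N₂) → M}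
    (hg : ∀ j, SemiconjBy u (g j) (g (j + 1))) (hg' : ∀ j, SemiconjBy u (g' j) (g' (j + 1)))
    (hgg' : ∀ j, g j * g' j = 1) (hg'g : ∀ j, g' j * g j = 1)
    (hfar : ∀ j (k : ℕ), 2 ≤ k → k + 2 ≤ N₁ + N₂ → Commute (g' (j + k)) (g j)) :
    Commute (u * descProd g' (-1) N₂) (descProd g N₁ N₁ * u) := by
  obtain ⟨n₁, rfl⟩ := Nat.exists_eq_add_of_le' h1
  obtain ⟨n₂, rfl⟩ := Nat.exists_eq_add_of_le' h2
  have hN : ((n₁ + 1 : ℕ) : ZMod (n₁ + 1 + (n₂ + 1))) + (n₂ + 1 : ℕ) = 0 := by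
    exact_mod_cast ZMod.natCast_self _
  set a : ZMod (n₁ + 1 + (n₂ + 1)) := ((n₁ + 1 : ℕ) : ZMod _) - 1
  set Q := descProd g' (-1 - 1) n₂
  set R := descProd g (a - 1) n₁
  have hP₂u : descProd g (n₁ + 1 : ℕ) (n₁ + 1) * u = u * descProd g a (n₁ + 1) := by
    simpa [a] using (descProd_semiconjBy hg a (n₁ + 1)).eq.symm
  have hP₁u : descProd g' (-1) (n₂ + 1) * u = u * descProd g' (-1 - 1) (n₂ + 1) := by
    simpa using (descProd_semiconjBy hg' (-1 - 1) (n₂ + 1)).eq.symm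
  have hleft : descProd g' (-1 - 1) (n₂ + 1) * descProd g a (n₁ + 1) = Q * R := by
    have hjunction : -1 - 1 - (n₂ : ZMod (n₁ + 1 + (n₂ + 1))) = a := by
      simp only [a]; push_cast at hN ⊢; linear_combination -hN
    rw [descProd_succ', descProd_succ, hjunction, mul_assoc, ← mul_assoc (g' a), hg'g, one_mul]
  have hright : descProd g a (n₁ + 1) * u * descProd g' (-1) (n₂ + 1) = u * (R * Q) := by
    have hu := (descProd_semiconjBy hg (a - 1) (n₁ + 1)).eq
    rw [sub_add_cancel] at hu
    have hjunction : a - 1 - (n₁ : ZMod (n₁ + 1 + (n₂ + 1))) = -1 := by simp only [a]; push_cast; ring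
    rw [← hu, descProd_succ', hjunction, descProd_succ g' (-1), mul_assoc, mul_assoc,
      ← mul_assoc (g (-1)), hgg', one_mul]
  have hQR : Commute Q R := commute_descProd fun s hs t ht => by
    have hdist : a - 1 - t + ((n₂ + 1 - s + t : ℕ) : ZMod (n₁ + 1 + (n₂ + 1))) = -1 - 1 - s := by
      simp only [a]; push_cast [Nat.cast_sub (show s ≤ n₂ + 1 by omega)] at hN ⊢
      linear_combination hN
    rw [← hdist]; exact hfar _ _ (by omega) (by omega)
  calc u * descProd g' (-1) (n₂ + 1) * (descProd g (n₁ + 1 : ℕ) (n₁ + 1) * u)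
      = u * (descProd g' (-1) (n₂ + 1) * u) * descProd g a (n₁ + 1) := by
        rw [hP₂u]; simp only [mul_assoc]
    _ = u * u * (Q * R) := by rw [hP₁u, ← hleft]; simp only [mul_assoc]
    _ = u * u * (R * Q) := by rw [hQR.eq]
    _ = u * (descProd g a (n₁ + 1) * u * descProd g' (-1) (n₂ + 1)) := by
        rw [hright]; simp only [mul_assoc]
    _ = descProd g (n₁ + 1 : ℕ) (n₁ + 1) * u * (u * descProd g' (-1) (n₂ + 1)) := by
        rw [hP₂u]; simp only [mul_assoc]

section SmulOneSubSmul

variable {R A : Type*} [CommRing R] [Ring A] [Algebra R A]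

theorem SemiconjBy.smul_one_sub_smul {u x y : A} (h : SemiconjBy u x y) (a b : R) :
    SemiconjBy u (a • 1 - b • x) (a • 1 - b • y) :=
  ((SemiconjBy.one_right u).smul_right a).sub_right (h.smul_right b)

theorem Commute.smul_one_sub_smul {x y : A} (h : Commute x y) (a b a' b' : R) :
    Commute (a • 1 - b • x) (a' • 1 - b' • y) :=
  (SemiconjBy.smul_one_sub_smul (SemiconjBy.smul_one_sub_smul h a' b').symm a b).symm

theorem smul_one_sub_smul_mul_smul_one_sub_smul {x : A} {m : R} (hx : x * x = m • x)
    (a b a' b' : R) :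
    (a • 1 - b • x) * (a' • 1 - b' • x) =
      (a * a') • 1 - (a * b' + b * a' - b * b' * m) • x := by
  simp only [sub_mul, mul_sub, smul_mul_smul_comm, one_mul, mul_one, hx, smul_smul]
  module

end SmulOneSubSmul

theorem braid_mul_braid_inv {A : Type*} [Ring A] [Algebra ℂ A] {x : A} {q sq : ℂ}
    (hq : q ≠ 0) (hsq : sq * sq = q) (hx : x * x = (q + q⁻¹) • x) :
    (Complex.I • (sq • 1 - sq⁻¹ • x)) * ((-Complex.I) • (sq⁻¹ • 1 - sq • x)) = 1 := by
  have hsq0 : sq ≠ 0 := by rintro rfl; exact hq (by simpa using hsq.symm)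
  have hI : Complex.I * -Complex.I = 1 := by simp
  have hunit : sq * sq⁻¹ = 1 := mul_inv_cancel₀ hsq0
  have hlin : sq * sq + sq⁻¹ * sq⁻¹ - sq⁻¹ * sq * (q + q⁻¹) = 0 := by
    rw [← hsq]; field_simp; ring
  rw [smul_mul_smul_comm, smul_one_sub_smul_mul_smul_one_sub_smul hx, hI, hunit, hlin,
    zero_smul, sub_zero, one_smul, one_smul]

namespace AffineTLRel

variable {A : Type*} [Ring A] [Algebra ℂ A] {N : ℕ} {m : ℂ} {u uinv : A} {e : ZMod N → A}

theorem semiconjBy_e (hrel : AffineTLRel A N m u uinv e) (j : ZMod N) :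
    SemiconjBy u (e j) (e (j + 1)) := by
  rw [SemiconjBy, ← hrel.uconj, mul_assoc _ uinv, hrel.uinv_mul, mul_one]

theorem commute_e_add (hrel : AffineTLRel A N m u uinv e) (j : ZMod N) {k : ℕ}
    (hk : 2 ≤ k) (hkN : k + 2 ≤ N) : Commute (e (j + k)) (e j) := by
  have hne : ∀ c : ℕ, 0 < c → c < N → (c : ZMod N) ≠ 0 := fun c hc hcN h =>
    Nat.not_dvd_of_pos_of_lt hc hcN ((ZMod.natCast_eq_zero_iff c N).mp h)
  refine hrel.ecomm _ _ (fun h => hne k (by omega) (by omega) ?_)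
    (fun h => hne (k - 1) (by omega) (by omega) ?_)
    (fun h => hne (k + 1) (by omega) (by omega) ?_)
  · linear_combination h
  · push_cast [Nat.cast_sub (show 1 ≤ k by omega)]; linear_combination h
  · push_cast; linear_combination -h

end AffineTLRel

theorem atl_translation_images_commute_general (A : Type*) [Ring A] [Algebra ℂ A]
    (N₁ N₂ : ℕ) (h1 : 1 ≤ N₁) (h2 : 1 ≤ N₂)
    (q sq : ℂ) (hq : q ≠ 0) (hsq : sq * sq = q)
    (u uinv : A) (e : ZMod (N₁ + N₂) → A)
    (hrel : AffineTLRel A (N₁ + N₂) (q + q⁻¹) u uinv e) :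
    let g : ZMod (N₁ + N₂) → A := fun j => Complex.I • (sq • (1 : A) - sq⁻¹ • e j)
    let ginv : ZMod (N₁ + N₂) → A :=
      fun j => (-Complex.I) • (sq⁻¹ • (1 : A) - sq • e j)
    let u1 : A := u *
      ((List.range N₂).map (fun t => ginv ((N₁ + N₂ - 1 - t : ℕ) : ZMod (N₁ + N₂)))).prod
    let u2 : A :=
      ((List.range N₁).map (fun t => g ((N₁ - t : ℕ) : ZMod (N₁ + N₂)))).prod * u
    u1 * u2 = u2 * u1 := by
  intro g ginv u1 u2
  have hinv : ∀ j, g j * ginv j = 1 := fun j => braid_mul_braid_inv hq hsq (hrel.esq j)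
  have hcomm : ∀ j, Commute (g j) (ginv j) := fun j =>
    (((Commute.refl (e j)).smul_one_sub_smul _ _ _ _).smul_left _).smul_right _
  have key := commute_mul_descProd_descProd_mul h1 h2
    (fun j => ((hrel.semiconjBy_e j).smul_one_sub_smul _ _).smul_right _)
    (fun j => ((hrel.semiconjBy_e j).smul_one_sub_smul _ _).smul_right _)
    hinv (fun j => (hcomm j).eq ▸ hinv j)
    (fun j _ hk hkN =>
      (((hrel.commute_e_add j hk hkN).smul_one_sub_smul _ _ _ _).smul_left _).smul_right _)
  have hneg : ((N₁ + N₂ - 1 : ℕ) : ZMod (N₁ + N₂)) = -1 := by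
    rw [Nat.cast_sub (by omega), ZMod.natCast_self, Nat.cast_one, zero_sub]
  rw [← hneg, descProd_natCast _ (by omega), descProd_natCast _ (by omega)] at key
  exact key

/-- In the affine Temperley–Lieb algebra `aTL_{N₁+N₂}(m)` with `m = q + q⁻¹`, the images
`u⁽¹⁾ = u g_{N−1}⁻¹ ⋯ g_{N₁}⁻¹` and `u⁽²⁾ = g_{N₁} ⋯ g_1 u` of the two translation
generators (with `N = N₁ + N₂` and `g_i = i(q^{1/2}·1 − q^{-1/2} e_i)`,
`g_i⁻¹ = −i(q^{-1/2}·1 − q^{1/2} e_i)`) commute: `u⁽¹⁾ u⁽²⁾ = u⁽²⁾ u⁽¹⁾`. -/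
theorem atl_translation_images_commute (A : Type*) [Ring A] [Algebra ℂ A]
    (N₁ N₂ : ℕ) (h1 : 1 ≤ N₁) (h2 : 1 ≤ N₂)
    (q sq : ℂ) (hq : q ≠ 0) (hq2 : q ^ 2 ≠ -1) (hsq : sq * sq = q)
    (u uinv : A) (e : ZMod (N₁ + N₂) → A)
    (hrel : AffineTLRel A (N₁ + N₂) (q + q⁻¹) u uinv e) :
    let g : ZMod (N₁ + N₂) → A := fun j => Complex.I • (sq • (1 : A) - sq⁻¹ • e j)
    let ginv : ZMod (N₁ + N₂) → A :=
      fun j => (-Complex.I) • (sq⁻¹ • (1 : A) - sq • e j)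
    let u1 : A := u *
      ((List.range N₂).map (fun t => ginv ((N₁ + N₂ - 1 - t : ℕ) : ZMod (N₁ + N₂)))).prod
    let u2 : A :=
      ((List.range N₁).map (fun t => g ((N₁ - t : ℕ) : ZMod (N₁ + N₂)))).prod * u
    u1 * u2 = u2 * u1 :=
  atl_translation_images_commute_general A N₁ N₂ h1 h2 q sq hq hsq u uinv e hrel
end

section
/- In the affine Temperley–Lieb algebra aTL_{N+1}(m) with m = q + q^{-1}, the assignment u ↦ u g_N^{-1}, e_i ↦ e_i for 1 ≤ i ≤ N−1, e_0 ↦ g_N e_0 g_N^{-1} defines an algebra homomorphism from aTL_N(m): the images satisfy all defining relations of aTL_N, including (u g_N^{-1})² e_{N-1} = e_1 ⋯ e_{N-1}. -/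
section Conj

variable {M : Type*} [Monoid M] {g gi : M}

theorem conj_mul_conj (h : gi * g = 1) (x y : M) :
    g * x * gi * (g * y * gi) = g * (x * y) * gi := by
  calc g * x * gi * (g * y * gi) = g * (x * ((gi * g) * y)) * gi := by simp only [mul_assoc]
    _ = g * (x * y) * gi := by rw [h, one_mul]

theorem conj_eq_self (h : g * gi = 1) {y : M} (hy : Commute g y) : g * y * gi = y := by
  rw [hy.eq, mul_assoc, h, mul_one]

theorem conj_mul_mul_conj_of_conj_eq (h : gi * g = 1) {y : M} (hy : g * y * gi = y) (x : M) :
    g * x * gi * y * (g * x * gi) = g * (x * y * x) * gi := by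
  calc g * x * gi * y * (g * x * gi) = g * x * gi * (g * y * gi) * (g * x * gi) := by rw [hy]
    _ = g * (x * y * x) * gi := by rw [conj_mul_conj h, conj_mul_conj h]

theorem mul_conj_mul_of_conj_eq (h : gi * g = 1) {y : M} (hy : g * y * gi = y) (x : M) :
    y * (g * x * gi) * y = g * (y * x * y) * gi := by
  calc y * (g * x * gi) * y = g * y * gi * (g * x * gi) * (g * y * gi) := by rw [hy]
    _ = g * (y * x * y) * gi := by rw [conj_mul_conj h, conj_mul_conj h]

theorem Commute.conj_of_mul_eq_one (h : gi * g = 1) {x y : M} (hxy : Commute x y) :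
    Commute (g * x * gi) (g * y * gi) := by
  rw [Commute, SemiconjBy, conj_mul_conj h, conj_mul_conj h, hxy.eq]

end Conj

section BraidGen

variable {A : Type*} [Ring A] [Algebra ℂ A] {s α β : ℂ}

/-- `g_N = braidGen q^{1/2} e_N`. -/
noncomputable def braidGen (s : ℂ) (f : A) : A := Complex.I • (s • 1 - s⁻¹ • f)

noncomputable def braidGenInv (s : ℂ) (f : A) : A := (-Complex.I) • (s⁻¹ • 1 - s • f)

/-- For `f = e_N` this is the expansion of `g_N y g_N⁻¹` (with `α = q`, `β = q⁻¹`) and of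
`g_N⁻¹ y g_N` (with `α = q⁻¹`, `β = q`). -/
def braidConj (α β : ℂ) (f y : A) : A := y - α • (y * f) - β • (f * y) + f * y * f

theorem braidGen_mul_braidGenInv (hs : s ≠ 0) {f : A} (hf : f * f = (s * s + (s * s)⁻¹) • f) :
    braidGen s f * braidGenInv s f = 1 := by
  simp only [braidGen, braidGenInv, smul_mul_assoc, mul_smul_comm, sub_mul, mul_sub, one_mul,
    mul_one, smul_sub, smul_smul, hf]
  match_scalars <;> grind [Complex.I_sq]

theorem braidGenInv_mul_braidGen (hs : s ≠ 0) {f : A} (hf : f * f = (s * s + (s * s)⁻¹) • f) :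
    braidGenInv s f * braidGen s f = 1 := by
  simp only [braidGen, braidGenInv, smul_mul_assoc, mul_smul_comm, sub_mul, mul_sub, one_mul,
    mul_one, smul_sub, smul_smul, hf]
  match_scalars <;> grind [Complex.I_sq]

theorem braidGen_conj (hs : s ≠ 0) (f y : A) :
    braidGen s f * y * braidGenInv s f = braidConj (s * s) (s * s)⁻¹ f y := by
  simp only [braidGen, braidGenInv, braidConj, smul_mul_assoc, mul_smul_comm, sub_mul, mul_sub,
    one_mul, mul_one, smul_sub, smul_smul, mul_assoc]
  match_scalars <;> grind [Complex.I_sq]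

theorem braidGenInv_conj (hs : s ≠ 0) (f y : A) :
    braidGenInv s f * y * braidGen s f = braidConj (s * s)⁻¹ (s * s) f y := by
  simp only [braidGen, braidGenInv, braidConj, smul_mul_assoc, mul_smul_comm, sub_mul, mul_sub,
    one_mul, mul_one, smul_sub, smul_smul, mul_assoc]
  match_scalars <;> grind [Complex.I_sq]

theorem SemiconjBy.braidGen {u f f' : A} (h : SemiconjBy u f f') :
    SemiconjBy u (braidGen s f) (braidGen s f') :=
  (((SemiconjBy.one_right u).smul_right s).sub_right (h.smul_right s⁻¹)).smul_right _

theorem SemiconjBy.braidGenInv {u f f' : A} (h : SemiconjBy u f f') :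
    SemiconjBy u (braidGenInv s f) (braidGenInv s f') :=
  (((SemiconjBy.one_right u).smul_right s⁻¹).sub_right (h.smul_right s)).smul_right _

theorem braidGen_conj_of_commute (hs : s ≠ 0) {f y : A}
    (hf : f * f = (s * s + (s * s)⁻¹) • f) (hy : Commute y f) :
    braidGen s f * y * braidGenInv s f = y :=
  conj_eq_self (braidGen_mul_braidGenInv hs hf) (SemiconjBy.braidGen hy).symm

theorem braidGenInv_conj_of_commute (hs : s ≠ 0) {f y : A}
    (hf : f * f = (s * s + (s * s)⁻¹) • f) (hy : Commute y f) :
    braidGenInv s f * y * braidGen s f = y :=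
  conj_eq_self (braidGenInv_mul_braidGen hs hf) (SemiconjBy.braidGenInv hy).symm

theorem braidConj_comm {f y : A} (hf : f * y * f = f) (hy : y * f * y = y) :
    braidConj α β f y = braidConj β α y f := by
  simp only [braidConj, hf, hy]
  abel

theorem conj_braidConj {u uinv : A} (h : uinv * u = 1) (f y : A) :
    u * braidConj α β f y * uinv = braidConj α β (u * f * uinv) (u * y * uinv) := by
  simp only [braidConj, mul_add, mul_sub, add_mul, sub_mul, mul_smul_comm, smul_mul_assoc,
    conj_mul_conj h]

/-- The Temperley–Lieb computation on three strands behind `e_{N-1} G e_{N-1} = e_{N-1}` and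
`G e_{N-1} G = G` for `G = g_N e_0 g_N⁻¹`. -/
theorem mul_braidConj_mul_self {x y f : A} (hx : x * x = (α + β) • x) (hxy : Commute x y)
    (hxfx : x * f * x = x) (hfyf : f * y * f = f) :
    x * braidConj α β f y * x = x := by
  have k1 : x * (y * x) = (α + β) • (y * x) := by
    rw [← mul_assoc, hxy.eq, mul_assoc, hx, mul_smul_comm]
  have k2 : x * (y * (f * x)) = y * x := by
    rw [← mul_assoc, hxy.eq, mul_assoc, ← mul_assoc x f x, hxfx]
  have k3 : x * (f * (y * x)) = y * x := by
    rw [← mul_assoc, mul_assoc x f, ← hxy.eq, ← mul_assoc, ← mul_assoc, hxfx, hxy.eq]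
  have k4 : x * (f * (y * (f * x))) = x := by
    rw [← mul_assoc y f x, ← mul_assoc f, ← mul_assoc f y f, hfyf, ← mul_assoc, hxfx]
  calc x * braidConj α β f y * x
      = x * (y * x) - α • (x * (y * (f * x))) - β • (x * (f * (y * x)))
          + x * (f * (y * (f * x))) := by
        simp only [braidConj, mul_sub, sub_mul, mul_add, add_mul, mul_smul_comm, smul_mul_assoc,
          mul_assoc]
    _ = x := by rw [k1, k2, k3, k4]; module

end BraidGen

theorem ZMod.natCast_ne_natCast_of_lt {n a b : ℕ} (ha : a < n) (hb : b ≤ n) (hab : a ≠ b)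
    (hb0 : b = n → a ≠ 0) : (a : ZMod n) ≠ b := by
  intro h
  rw [ZMod.natCast_eq_natCast_iff', Nat.mod_eq_of_lt ha] at h
  rcases hb.lt_or_eq with hb | rfl
  · exact hab (h.trans (Nat.mod_eq_of_lt hb))
  · exact hb0 rfl (h.trans (Nat.mod_self b))

theorem ZMod.val_add_one_cases {n : ℕ} [NeZero n] (j : ZMod n) :
    j.val + 1 < n ∧ (j + 1).val = j.val + 1 ∨ j.val = n - 1 ∧ (j + 1).val = 0 := by
  rcases (show j.val + 1 < n ∨ j.val + 1 = n by have := j.val_lt; omega) with h | h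
  · refine Or.inl ⟨h, ?_⟩
    rw [← ZMod.val_natCast_of_lt h, Nat.cast_succ, ZMod.natCast_zmod_val]
  · refine Or.inr ⟨by omega, ?_⟩
    rw [← ZMod.natCast_zmod_val j, ← Nat.cast_add_one, h, ZMod.natCast_self, ZMod.val_zero]

theorem ZMod.val_add_two_le_of_ne_add_one {n : ℕ} [NeZero n] {j l : ZMod n}
    (hjl : j.val < l.val) (h1 : j ≠ l + 1) (h2 : l ≠ j + 1) :
    j.val + 2 ≤ l.val ∧ l.val + 2 ≤ j.val + n := by
  have h1 : j.val ≠ (l + 1).val := fun h => h1 (ZMod.val_injective n h)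
  have h2 : l.val ≠ (j + 1).val := fun h => h2 (ZMod.val_injective n h)
  have := l.val_lt
  rcases l.val_add_one_cases with ⟨_, hl⟩ | ⟨_, hl⟩ <;>
    rcases j.val_add_one_cases with ⟨_, hj⟩ | ⟨_, hj⟩ <;> omega

namespace AffineTLRel

variable {A : Type*} [Ring A] [Algebra ℂ A] {n : ℕ} {m : ℂ} {u uinv : A} {e : ZMod n → A}

theorem eje_natCast (h : AffineTLRel A n m u uinv e) (a : ℕ) :
    e a * e (a + 1 : ℕ) * e a = e a := by
  simpa using h.eje a

theorem eje'_natCast (h : AffineTLRel A n m u uinv e) (a : ℕ) :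
    e (a + 1 : ℕ) * e a * e (a + 1 : ℕ) = e (a + 1 : ℕ) := by
  simpa using h.eje' a

theorem uconj_natCast (h : AffineTLRel A n m u uinv e) (a : ℕ) :
    u * e a * uinv = e (a + 1 : ℕ) := by
  simpa using h.uconj a

theorem semiconjBy_natCast (h : AffineTLRel A n m u uinv e) (a : ℕ) :
    SemiconjBy u (e a) (e (a + 1 : ℕ)) := by
  rw [SemiconjBy]
  rw [← h.uconj_natCast, mul_assoc _ uinv, h.uinv_mul, mul_one]

theorem commute_natCast (h : AffineTLRel A n m u uinv e) {a b : ℕ} (hab : a + 2 ≤ b)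
    (hb : b < n) (hba : b + 2 ≤ a + n) : Commute (e a) (e b) := by
  apply h.ecomm
  · exact ZMod.natCast_ne_natCast_of_lt (by omega) hb.le (by omega) (by omega)
  · rw [← Nat.cast_succ]
    exact ZMod.natCast_ne_natCast_of_lt (by omega) hb (by omega) (by omega)
  · rw [← Nat.cast_succ]
    exact ZMod.natCast_ne_natCast_of_lt hb (by omega) (by omega) (by omega)

theorem of_val [NeZero n] (F : ℕ → A) (mul_uinv : u * uinv = 1) (uinv_mul : uinv * u = 1)
    (esq : ∀ a, F a * F a = m • F a)
    (eje : ∀ a, a + 1 < n → F a * F (a + 1) * F a = F a)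
    (eje_last : F (n - 1) * F 0 * F (n - 1) = F (n - 1))
    (eje' : ∀ a, a + 1 < n → F (a + 1) * F a * F (a + 1) = F (a + 1))
    (eje'_last : F 0 * F (n - 1) * F 0 = F 0)
    (ecomm : ∀ a b, a + 2 ≤ b → b < n → b + 2 ≤ a + n → Commute (F a) (F b))
    (uconj : ∀ a, a + 1 < n → u * F a * uinv = F (a + 1))
    (uconj_last : u * F (n - 1) * uinv = F 0)
    (utwist : u * u * F (n - 1) = ((List.range (n - 1)).map fun t => F (t + 1)).prod) :
    AffineTLRel A n m u uinv fun j => F j.val := by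
  refine ⟨mul_uinv, uinv_mul, fun j => esq _, fun j => ?_, fun j => ?_, ?_, fun j => ?_, ?_⟩
  · rcases j.val_add_one_cases with ⟨h, hj⟩ | ⟨hj, hj'⟩
    · simp only [hj, eje _ h]
    · simp only [hj, hj', eje_last]
  · rcases j.val_add_one_cases with ⟨h, hj⟩ | ⟨hj, hj'⟩
    · simp only [hj, eje' _ h]
    · simp only [hj, hj', eje'_last]
  · intro j l h0 h1 h2
    rcases lt_or_gt_of_ne (fun h => h0 (ZMod.val_injective n h)) with h | h
    · obtain ⟨hjl, hlj⟩ := ZMod.val_add_two_le_of_ne_add_one h h1 h2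
      exact ecomm _ _ hjl l.val_lt hlj
    · obtain ⟨hlj, hjl⟩ := ZMod.val_add_two_le_of_ne_add_one h h2 h1
      exact (ecomm _ _ hlj j.val_lt hjl).symm
  · rcases j.val_add_one_cases with ⟨h, hj⟩ | ⟨hj, hj'⟩
    · simp only [hj, uconj _ h]
    · simp only [hj, hj', uconj_last]
  · have hneg : (-1 : ZMod n).val = n - 1 := by
      obtain ⟨k, rfl⟩ : ∃ k, n = k + 1 := ⟨n - 1, by have := NeZero.pos n; omega⟩
      exact ZMod.val_neg_one k
    simp only [hneg, utwist]
    congr 1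
    refine List.map_congr_left fun t ht => ?_
    rw [ZMod.val_natCast_of_lt (by have := List.mem_range.mp ht; omega)]

end AffineTLRel

section Embedding

variable {A : Type*} [Ring A] [Algebra ℂ A] {N : ℕ} {m s : ℂ} {u uinv : A}
  {e : ZMod (N + 1) → A}

namespace AffineTLRel

theorem eje_last (h : AffineTLRel A (N + 1) m u uinv e) : e N * e 0 * e N = e N := by
  simpa only [ZMod.natCast_self'] using h.eje N

theorem eje'_last (h : AffineTLRel A (N + 1) m u uinv e) : e 0 * e N * e 0 = e 0 := by
  simpa only [ZMod.natCast_self'] using h.eje' N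

theorem uconj_last (h : AffineTLRel A (N + 1) m u uinv e) : u * e N * uinv = e 0 := by
  simpa only [ZMod.natCast_self'] using h.uconj N

theorem semiconjBy_last (h : AffineTLRel A (N + 1) m u uinv e) :
    SemiconjBy u (e N) (e 0) := by
  simpa only [ZMod.natCast_self] using h.semiconjBy_natCast N

end AffineTLRel

/-- The images of the generators `e_0, …, e_{N-1}` of `aTL_N`: `e_0 ↦ g_N e_0 g_N⁻¹`. -/
noncomputable def embGen (s : ℂ) (e : ZMod (N + 1) → A) (a : ℕ) : A :=
  if a = 0 then braidGen s (e N) * e 0 * braidGenInv s (e N) else e a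

theorem embGen_mul_self (hs : s ≠ 0) (h : AffineTLRel A (N + 1) (s * s + (s * s)⁻¹) u uinv e)
    (a : ℕ) :
    embGen s e a * embGen s e a = (s * s + (s * s)⁻¹) • embGen s e a := by
  unfold embGen
  split_ifs
  · rw [conj_mul_conj (braidGenInv_mul_braidGen hs (h.esq _)), h.esq, mul_smul_comm,
      smul_mul_assoc]
  · exact h.esq _

theorem embGen_eje (hN : 3 ≤ N) (hs : s ≠ 0)
    (h : AffineTLRel A (N + 1) (s * s + (s * s)⁻¹) u uinv e) {a : ℕ} (ha : a + 1 < N) :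
    embGen s e a * embGen s e (a + 1) * embGen s e a = embGen s e a := by
  rcases Nat.eq_zero_or_pos a with rfl | ha0
  · have h1 : braidGen s (e N) * e (1 : ℕ) * braidGenInv s (e N) = e (1 : ℕ) :=
      braidGen_conj_of_commute hs (h.esq _) (h.commute_natCast (by omega) (by omega) (by omega))
    simp only [embGen, zero_add, if_true, one_ne_zero, if_false]
    have h010 : e 0 * e (1 : ℕ) * e 0 = e 0 := by simpa using h.eje_natCast 0
    rw [conj_mul_mul_conj_of_conj_eq (braidGenInv_mul_braidGen hs (h.esq _)) h1, h010]
  · simp only [embGen, Nat.pos_iff_ne_zero.mp ha0, Nat.add_one_ne_zero, if_false]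
    exact h.eje_natCast a

theorem embGen_eje' (hN : 3 ≤ N) (hs : s ≠ 0)
    (h : AffineTLRel A (N + 1) (s * s + (s * s)⁻¹) u uinv e) {a : ℕ} (ha : a + 1 < N) :
    embGen s e (a + 1) * embGen s e a * embGen s e (a + 1) = embGen s e (a + 1) := by
  rcases Nat.eq_zero_or_pos a with rfl | ha0
  · have h1 : braidGen s (e N) * e (1 : ℕ) * braidGenInv s (e N) = e (1 : ℕ) :=
      braidGen_conj_of_commute hs (h.esq _) (h.commute_natCast (by omega) (by omega) (by omega))
    simp only [embGen, zero_add, if_true, one_ne_zero, if_false]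
    have h101 : e (1 : ℕ) * e 0 * e (1 : ℕ) = e (1 : ℕ) := by simpa using h.eje'_natCast 0
    rw [mul_conj_mul_of_conj_eq (braidGenInv_mul_braidGen hs (h.esq _)) h1, h101, h1]
  · simp only [embGen, Nat.pos_iff_ne_zero.mp ha0, Nat.add_one_ne_zero, if_false]
    exact h.eje'_natCast a

theorem embGen_commute (hs : s ≠ 0) (h : AffineTLRel A (N + 1) (s * s + (s * s)⁻¹) u uinv e)
    {a b : ℕ} (hab : a + 2 ≤ b) (hb : b < N) (hba : b + 2 ≤ a + N) :
    Commute (embGen s e a) (embGen s e b) := by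
  rcases Nat.eq_zero_or_pos a with rfl | ha0
  · simp only [embGen, if_true, show b ≠ 0 by omega, if_false]
    rw [← braidGen_conj_of_commute hs (h.esq _)
      (h.commute_natCast (a := b) (b := N) (by omega) (by omega) (by omega))]
    exact (by simpa using h.commute_natCast hab (by omega) (by omega) : Commute (e 0) (e b))
      |>.conj_of_mul_eq_one (braidGenInv_mul_braidGen hs (h.esq _))
  · simp only [embGen, show a ≠ 0 by omega, show b ≠ 0 by omega, if_false]
    exact h.commute_natCast hab (by omega) (by omega)

theorem embGen_uconj (hs : s ≠ 0)
    (h : AffineTLRel A (N + 1) (s * s + (s * s)⁻¹) u uinv e) {a : ℕ} (ha : a + 1 < N) :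
    u * braidGenInv s (e N) * embGen s e a * (braidGen s (e N) * uinv) = embGen s e (a + 1) := by
  have hgig := braidGenInv_mul_braidGen hs (h.esq N)
  simp only [embGen, Nat.add_one_ne_zero, if_false]
  split_ifs with ha0
  · subst ha0
    calc u * braidGenInv s (e N) * (braidGen s (e N) * e 0 * braidGenInv s (e N))
          * (braidGen s (e N) * uinv)
        = u * (braidGenInv s (e N) * braidGen s (e N)) * e 0
          * (braidGenInv s (e N) * braidGen s (e N)) * uinv := by simp only [mul_assoc]
      _ = e (0 + 1 : ℕ) := by simpa [hgig] using h.uconj_natCast 0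
  · calc u * braidGenInv s (e N) * e a * (braidGen s (e N) * uinv)
        = u * (braidGenInv s (e N) * e a * braidGen s (e N)) * uinv := by simp only [mul_assoc]
      _ = e (a + 1 : ℕ) := by
        rw [braidGenInv_conj_of_commute hs (h.esq _)
          (h.commute_natCast (by omega) (by omega) (by omega)), h.uconj_natCast]

theorem embGen_eje_last (hN : 3 ≤ N) (hs : s ≠ 0)
    (h : AffineTLRel A (N + 1) (s * s + (s * s)⁻¹) u uinv e) :
    embGen s e (N - 1) * embGen s e 0 * embGen s e (N - 1) = embGen s e (N - 1) := by
  obtain ⟨M, rfl⟩ : ∃ M, N = M + 1 := ⟨N - 1, by omega⟩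
  simp only [embGen, Nat.add_sub_cancel, if_true, show M ≠ 0 by omega, if_false]
  rw [braidGen_conj hs]
  exact mul_braidConj_mul_self (h.esq _)
    (by simpa using (h.commute_natCast (a := 0) (b := M) (by omega) (by omega) (by omega)).symm)
    (h.eje_natCast M) h.eje_last

theorem embGen_eje'_last (hN : 3 ≤ N) (hs : s ≠ 0)
    (h : AffineTLRel A (N + 1) (s * s + (s * s)⁻¹) u uinv e) :
    embGen s e 0 * embGen s e (N - 1) * embGen s e 0 = embGen s e 0 := by
  obtain ⟨M, rfl⟩ : ∃ M, N = M + 1 := ⟨N - 1, by omega⟩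
  simp only [embGen, Nat.add_sub_cancel, if_true, show M ≠ 0 by omega, if_false]
  calc braidGen s (e ↑(M + 1)) * e 0 * braidGenInv s (e ↑(M + 1)) * e M
        * (braidGen s (e ↑(M + 1)) * e 0 * braidGenInv s (e ↑(M + 1)))
      = braidGen s (e ↑(M + 1))
        * (e 0 * (braidGenInv s (e ↑(M + 1)) * e M * braidGen s (e ↑(M + 1))) * e 0)
        * braidGenInv s (e ↑(M + 1)) := by simp only [mul_assoc]
    _ = braidGen s (e ↑(M + 1)) * e 0 * braidGenInv s (e ↑(M + 1)) := by
      rw [braidGenInv_conj hs, mul_braidConj_mul_self (by rw [add_comm (s * s)⁻¹]; exact h.esq 0)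
        (by simpa using h.commute_natCast (a := 0) (b := M) (by omega) (by omega) (by omega))
        h.eje'_last (h.eje'_natCast M)]

theorem embGen_uconj_last (hN : 3 ≤ N) (hs : s ≠ 0)
    (h : AffineTLRel A (N + 1) (s * s + (s * s)⁻¹) u uinv e) :
    u * braidGenInv s (e N) * embGen s e (N - 1) * (braidGen s (e N) * uinv) = embGen s e 0 := by
  obtain ⟨M, rfl⟩ : ∃ M, N = M + 1 := ⟨N - 1, by omega⟩
  simp only [embGen, Nat.add_sub_cancel, if_true, show M ≠ 0 by omega, if_false]
  calc u * braidGenInv s (e ↑(M + 1)) * e M * (braidGen s (e ↑(M + 1)) * uinv)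
      = u * (braidGenInv s (e ↑(M + 1)) * e M * braidGen s (e ↑(M + 1))) * uinv := by
        simp only [mul_assoc]
    _ = braidConj (s * s)⁻¹ (s * s) (e 0) (e ↑(M + 1)) := by
      rw [braidGenInv_conj hs, conj_braidConj h.uinv_mul, h.uconj_last, h.uconj_natCast]
    _ = braidGen s (e ↑(M + 1)) * e 0 * braidGenInv s (e ↑(M + 1)) := by
      rw [braidGen_conj hs, braidConj_comm h.eje_last h.eje'_last]

/-- Since `u g_N⁻¹ = g_0⁻¹ u` and `u² g_N⁻¹ e_{N-1} = g_0 e_1 ⋯ e_{N-1}`, the two braid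
factors cancel. -/
theorem embGen_utwist (hN : 3 ≤ N) (hs : s ≠ 0)
    (h : AffineTLRel A (N + 1) (s * s + (s * s)⁻¹) u uinv e) :
    u * braidGenInv s (e N) * (u * braidGenInv s (e N)) * embGen s e (N - 1) =
      ((List.range (N - 1)).map fun t => embGen s e (t + 1)).prod := by
  obtain ⟨M, rfl⟩ : ∃ M, N = M + 2 := ⟨N - 2, by omega⟩
  simp only [embGen, Nat.add_one_ne_zero, if_false, show M + 2 - 1 = M + 1 by omega]
  set x := e (M + 1 : ℕ)
  set f := e (M + 2 : ℕ)
  set Q := ((List.range (M + 1)).map fun t => e (t + 1 : ℕ)).prod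
  have hxfx : x * f * x = x := h.eje_natCast (M + 1)
  have hQfx : Q * f * x = Q := by
    have hQ : Q = ((List.range M).map fun t => e (t + 1 : ℕ)).prod * x := List.prod_range_succ _ _
    rw [hQ]
    simp only [mul_assoc]
    rw [← mul_assoc x f x, hxfx]
  have huuf : u * u * f = Q * f := by
    have hneg : ((M + 2 : ℕ) : ZMod (M + 2 + 1)) = -1 :=
      eq_neg_iff_add_eq_zero.mpr (ZMod.natCast_self' _)
    have := h.utwist
    rwa [show M + 2 + 1 - 1 = M + 1 + 1 by omega, List.prod_range_succ, ← hneg] at this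
  have hux : SemiconjBy u x f := h.semiconjBy_natCast (M + 1)
  have huf : SemiconjBy u f (e 0) := h.semiconjBy_last
  have huux : u * u * x = e 0 * Q := by
    have huux' : u * u * x = e 0 * (u * u) := by
      rw [mul_assoc, hux.eq, ← mul_assoc, huf.eq, mul_assoc]
    calc u * u * x = u * u * (x * f * x) := by rw [hxfx]
      _ = u * u * x * (f * x) := by simp only [mul_assoc]
      _ = e 0 * (u * u * f) * x := by rw [huux']; simp only [mul_assoc]
      _ = e 0 * Q := by rw [huuf, mul_assoc, hQfx]
  have huugx : u * u * braidGenInv s f * x = braidGen s (e 0) * Q := by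
    calc u * u * braidGenInv s f * x
        = (-Complex.I) • (s⁻¹ • (u * u * x) - s • (u * u * f * x)) := by
          simp only [braidGenInv, mul_smul_comm, smul_mul_assoc, mul_sub, sub_mul, mul_one]
      _ = (-Complex.I) • (s⁻¹ • (e 0 * Q) - s • Q) := by rw [huux, huuf, hQfx]
      _ = braidGen s (e 0) * Q := by
        simp only [braidGen, smul_mul_assoc, sub_mul, one_mul]
        module
  calc u * braidGenInv s f * (u * braidGenInv s f) * x
      = u * braidGenInv s f * (u * braidGenInv s f * x) := by simp only [mul_assoc]
    _ = braidGenInv s (e 0) * (u * u * braidGenInv s f * x) := by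
        nth_rw 1 [(SemiconjBy.braidGenInv huf).eq]
        simp only [mul_assoc]
    _ = Q := by rw [huugx, ← mul_assoc, braidGenInv_mul_braidGen hs (h.esq 0), one_mul]

theorem embGen_affineTLRel (hN : 3 ≤ N) (hs : s ≠ 0)
    (h : AffineTLRel A (N + 1) (s * s + (s * s)⁻¹) u uinv e) :
    AffineTLRel A N (s * s + (s * s)⁻¹) (u * braidGenInv s (e N)) (braidGen s (e N) * uinv)
      fun j => embGen s e j.val := by
  have : NeZero N := ⟨by omega⟩
  refine AffineTLRel.of_val _ ?_ ?_ (embGen_mul_self hs h) (fun a => embGen_eje hN hs h)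
    (embGen_eje_last hN hs h) (fun a => embGen_eje' hN hs h) (embGen_eje'_last hN hs h)
    (fun a b => embGen_commute hs h) (fun a => embGen_uconj hs h) (embGen_uconj_last hN hs h)
    (embGen_utwist hN hs h)
  · rw [mul_assoc, ← mul_assoc _ (braidGen s _), braidGenInv_mul_braidGen hs (h.esq N), one_mul,
      h.mul_uinv]
  · rw [mul_assoc, ← mul_assoc uinv, h.uinv_mul, one_mul, braidGen_mul_braidGenInv hs (h.esq N)]

end Embedding

theorem atl_one_step_embedding_general (A : Type*) [Ring A] [Algebra ℂ A]
    (N : ℕ) (hN : 3 ≤ N)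
    (q sq : ℂ) (hq : q ≠ 0) (hsq : sq * sq = q)
    (u uinv : A) (e : ZMod (N + 1) → A)
    (hrel : AffineTLRel A (N + 1) (q + q⁻¹) u uinv e) :
    let gN : A := Complex.I • (sq • (1 : A) - sq⁻¹ • e ((N : ℕ) : ZMod (N + 1)))
    let gNinv : A := (-Complex.I) • (sq⁻¹ • (1 : A) - sq • e ((N : ℕ) : ZMod (N + 1)))
    let U : A := u * gNinv
    let Uinv : A := gN * uinv
    let E : ZMod N → A := fun i =>
      if i.val = 0 then gN * e 0 * gNinv else e ((i.val : ℕ) : ZMod (N + 1))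
    AffineTLRel A N (q + q⁻¹) U Uinv E := by
  subst hsq
  exact embGen_affineTLRel hN (left_ne_zero_of_mul hq) hrel

/-- One-step embedding `aTL_N(m) → aTL_{N+1}(m)` with `m = q + q⁻¹`:  inside
`aTL_{N+1}(m)` (given by `u`, `uinv`, `e`), the assignment `u ↦ u g_N⁻¹`,
`e_i ↦ e_i` for `1 ≤ i ≤ N−1`, and `e_0 ↦ g_N e_0 g_N⁻¹` defines an algebra
homomorphism from `aTL_N(m)`: the images satisfy all the defining relations of
`aTL_N(m)`, including `(u g_N⁻¹)² e_{N−1} = e_1 ⋯ e_{N−1}`.  Here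
`g_N = i(q^{1/2}·1 − q^{-1/2} e_N)` with inverse `g_N⁻¹ = −i(q^{-1/2}·1 − q^{1/2} e_N)`. -/
theorem atl_one_step_embedding (A : Type*) [Ring A] [Algebra ℂ A]
    (N : ℕ) (hN : 3 ≤ N)
    (q sq : ℂ) (hq : q ≠ 0) (hq2 : q ^ 2 ≠ -1) (hsq : sq * sq = q)
    (u uinv : A) (e : ZMod (N + 1) → A)
    (hrel : AffineTLRel A (N + 1) (q + q⁻¹) u uinv e) :
    let gN : A := Complex.I • (sq • (1 : A) - sq⁻¹ • e ((N : ℕ) : ZMod (N + 1)))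
    let gNinv : A := (-Complex.I) • (sq⁻¹ • (1 : A) - sq • e ((N : ℕ) : ZMod (N + 1)))
    let U : A := u * gNinv
    let Uinv : A := gN * uinv
    let E : ZMod N → A := fun i =>
      if i.val = 0 then gN * e 0 * gNinv else e ((i.val : ℕ) : ZMod (N + 1))
    AffineTLRel A N (q + q⁻¹) U Uinv E :=
  atl_one_step_embedding_general A N hN q sq hq hsq u uinv e hrel
end

section
/- Let e_(N) = (1/m)·e_{N+1} in aTL_{N+2}(m) with m ≠ 0. Under the map ψ: u ↦ m·e_(N)·u·e_(N) (as an element of e_(N) aTL_{N+2} e_(N)), one has the relation ψ(u)² · ψ(e_{N-1}) = ψ(e_1)⋯ψ(e_{N-1}), where ψ(e_j) = e_(N) e_j for 1 ≤ j ≤ N−1; concretely, m^{-2} e_{N+1} u e_{N+1} u e_{N+1} e_{N-1} = m^{-1} e_1 e_2 ⋯ e_{N-1} e_{N+1} in aTL_{N+2}(m). -/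
section Monoid

variable {M : Type*} [Monoid M]

theorem List.prod_range_add_three_mul_of_braid (f : ℕ → M) {j : ℕ}
    (hbraid : f j * f (j + 1) * f j = f j) (hcomm : Commute (f j) (f (j + 2))) :
    ((List.range (j + 3)).map f).prod * f j = ((List.range (j + 1)).map f).prod * f (j + 2) := by
  simp only [List.prod_range_succ, mul_assoc, ← hcomm.eq]
  rw [← mul_assoc (f (j + 1)), ← mul_assoc (f j) (f (j + 1) * f j),
    ← mul_assoc (f j) (f (j + 1)), hbraid]

theorem IsIdempotentElem.mul_list_prod_map_mul_left {p : M} (hp : IsIdempotentElem p)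
    {ι : Type*} (f : ι → M) (l : List ι) (hc : ∀ i ∈ l, Commute p (f i)) :
    p * (l.map fun i => p * f i).prod = p * (l.map f).prod := by
  induction l with
  | nil => rfl
  | cons x t ih =>
    simp only [List.map_cons, List.prod_cons, List.forall_mem_cons] at hc ⊢
    rw [← mul_assoc, ← mul_assoc, hp.eq, (hc.1).eq, mul_assoc, ih hc.2, ← mul_assoc,
      ← (hc.1).eq, mul_assoc]

theorem IsIdempotentElem.list_prod_map_mul_left {p : M} (hp : IsIdempotentElem p)
    {ι : Type*} (f : ι → M) {l : List ι} (hl : l ≠ []) (hc : ∀ i ∈ l, Commute p (f i)) :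
    (l.map fun i => p * f i).prod = p * (l.map f).prod := by
  obtain ⟨x, t, rfl⟩ := List.exists_cons_of_ne_nil hl
  rw [← hp.mul_list_prod_map_mul_left f _ hc]
  simp only [List.map_cons, List.prod_cons, ← mul_assoc, hp.eq]

end Monoid

theorem ZMod.natCast_eq_neg_one {n a : ℕ} (h : a + 1 = n) : (a : ZMod n) = -1 :=
  eq_neg_of_add_eq_zero_left (by rw [← Nat.cast_add_one, h, ZMod.natCast_self])

section Compression

variable {K A : Type*} [Field K] [Ring A] [Algebra K A]

theorem smul_compression_sq_mul {m : K} (hm : m ≠ 0) {E : A} (hE : E * E = m • E) (u x : A) :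
    m • ((m⁻¹ • E) * u * (m⁻¹ • E)) * (m • ((m⁻¹ • E) * u * (m⁻¹ • E))) * ((m⁻¹ • E) * x)
      = m⁻¹ • (E * u * E * u * E * x) := by
  have hEE : ∀ y, E * (E * y) = m • (E * y) := fun y => by
    rw [← mul_assoc, hE, smul_mul_assoc]
  simp only [smul_mul_assoc, mul_smul_comm, smul_smul, mul_assoc, hEE]
  congr 1
  field_simp

end Compression

namespace AffineTLRel

variable {A : Type*} [Ring A] [Algebra ℂ A] {n : ℕ} {m : ℂ} {u uinv : A} {e : ZMod n → A}

theorem u_mul_e (h : AffineTLRel A n m u uinv e) (j : ZMod n) : u * e j = e (j + 1) * u := by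
  rw [← h.uconj j, mul_assoc, h.uinv_mul, mul_one]

theorem commute_neg_one_natCast (h : AffineTLRel A n m u uinv e) {a : ℕ} (ha : 0 < a)
    (han : a + 2 < n) : Commute (e (-1)) (e a) := by
  have hne : ∀ b : ℕ, 0 < b → b < n → (b : ZMod n) ≠ 0 := fun b hb hbn hb0 =>
    absurd (Nat.le_of_dvd hb ((ZMod.natCast_eq_zero_iff b n).1 hb0)) (by omega)
  refine h.ecomm _ _ ?_ ?_ ?_
  · exact fun h1 => hne (a + 1) (by omega) (by omega) (by push_cast; linear_combination -h1)
  · exact fun h1 => hne (a + 2) (by omega) (by omega) (by push_cast; linear_combination -h1)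
  · exact fun h1 => hne a ha (by omega) (by linear_combination h1)

theorem twist_compression (h : AffineTLRel A n m u uinv e) {a : ℕ} (ha : 0 < a)
    (han : a + 3 = n) :
    e (-1) * u * e (-1) * u * e (-1) * e a
      = e (-1) * ((List.range a).map fun t => e ((t + 1 : ℕ) : ZMod n)).prod := by
  obtain ⟨j, rfl⟩ : ∃ j, a = j + 1 := ⟨a - 1, by omega⟩
  set f : ℕ → A := fun t => e ((t + 1 : ℕ) : ZMod n)
  set P := ((List.range (j + 1)).map f).prod
  have hlast : f (j + 2) = e (-1) := congrArg e (ZMod.natCast_eq_neg_one (by omega))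
  have hbraid : f j * f (j + 1) * f j = f j := by
    simpa only [f, Nat.cast_succ] using h.eje ((j + 1 : ℕ) : ZMod n)
  have hcomm : Commute (f j) (f (j + 2)) :=
    hlast ▸ (h.commute_neg_one_natCast (by omega) (by omega)).symm
  have hcommP : Commute (e (-1)) P := by
    refine Commute.list_prod_right _ _ fun x hx => ?_
    obtain ⟨t, ht, rfl⟩ := List.mem_map.1 hx
    exact h.commute_neg_one_natCast (by omega) (by rw [List.mem_range] at ht; omega)
  have htwist : u * u * e (-1) = ((List.range (j + 3)).map f).prod := by
    rw [h.utwist]; congr 3; omega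
  calc e (-1) * u * e (-1) * u * e (-1) * f j
      = e (-1) * e 0 * (u * u * e (-1)) * f j := by
        rw [mul_assoc (e (-1)) u, h.u_mul_e, neg_add_cancel]; simp only [mul_assoc]
    _ = e (-1) * e 0 * e (-1) * P := by
        rw [htwist, mul_assoc _ _ (f j), List.prod_range_add_three_mul_of_braid f hbraid hcomm,
          hlast, ← hcommP.eq]; simp only [mul_assoc]
    _ = e (-1) * P := by
        have := h.eje (-1); rw [neg_add_cancel] at this; rw [this]

end AffineTLRel

/-- Let `e_(N) = (1/m) e_{N+1}` in `aTL_{N+2}(m)` with `m ≠ 0` (so `e_{N+1} = e (−1)` in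
`ℤ/(N+2)ℤ`).  Under the idempotent-compression map `ψ` with `ψ(u) = m · e_(N) u e_(N)`
and `ψ(e_j) = e_(N) e_j` for `1 ≤ j ≤ N−1`, one has the relation
`ψ(u)² ψ(e_{N−1}) = ψ(e_1) ⋯ ψ(e_{N−1})`. -/
theorem atl_compression_twist_relation (A : Type*) [Ring A] [Algebra ℂ A]
    (N : ℕ) (hN : 2 ≤ N) (m : ℂ) (hm : m ≠ 0)
    (u uinv : A) (e : ZMod (N + 2) → A)
    (hrel : AffineTLRel A (N + 2) m u uinv e) :
    let eN : A := m⁻¹ • e (-1)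
    let ψu : A := m • (eN * u * eN)
    ψu * ψu * (eN * e ((N - 1 : ℕ) : ZMod (N + 2)))
      = ((List.range (N - 1)).map (fun t => eN * e ((t + 1 : ℕ) : ZMod (N + 2)))).prod := by
  intro eN ψu
  have heN : IsIdempotentElem eN := by
    simp only [IsIdempotentElem, eN, smul_mul_smul, hrel.esq, smul_smul]
    congr 1; field_simp
  rw [smul_compression_sq_mul hm (hrel.esq (-1)), hrel.twist_compression (by omega) (by omega),
    heN.list_prod_map_mul_left _ (by rw [Ne, List.range_eq_nil]; omega), smul_mul_assoc]
  intro t ht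
  exact (hrel.commute_neg_one_natCast (by omega) (by rw [List.mem_range] at ht; omega)).smul_left _
end
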